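/- arXiv:2503.06904 — 4 statements merged into one kernel-verified Lean document; each statement's English description precedes it below -/
import Mathlib

section
/- For every real number a with 0 < a < 1, the improper integral ∫₀^∞ x^{a-1}/(1+x) dx converges and equals π·csc(aπ). -/
/-!
The substitution `x = t / (1 - t)` turns `∫₀^∞ x^(u-1) / (1 + x)^(u+v) dx` into the Beta integral
`B(u, v) = Γ(u) Γ(v) / Γ(u + v)`. For `u = a`, `v = 1 - a` this is `Γ(a) Γ(1 - a)`, which Euler's
reflection formula evaluates to `π / sin (π a)`.
-/

open MeasureTheory Real Set

section BetaIntegral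

variable {u v : ℝ}

lemma ofReal_rpow_mul_one_sub_rpow {x : ℝ} (hx : x ∈ Icc 0 1) :
    (((x ^ (u - 1) * (1 - x) ^ (v - 1) : ℝ)) : ℂ) =
      (x : ℂ) ^ ((u : ℂ) - 1) * (1 - (x : ℂ)) ^ ((v : ℂ) - 1) := by
  rw [Complex.ofReal_mul, Complex.ofReal_cpow hx.1, Complex.ofReal_cpow (sub_nonneg.2 hx.2)]
  push_cast
  rfl

lemma integrableOn_rpow_mul_one_sub_rpow (hu : 0 < u) (hv : 0 < v) :
    IntegrableOn (fun x : ℝ => x ^ (u - 1) * (1 - x) ^ (v - 1)) (Ioo 0 1) := by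
  have hB := Complex.betaIntegral_convergent (u := u) (v := v) (by simpa) (by simpa)
  rw [intervalIntegrable_iff_integrableOn_Ioo_of_le zero_le_one] at hB
  have hRe := (hB.congr_fun (fun x hx => (ofReal_rpow_mul_one_sub_rpow
    (Ioo_subset_Icc_self hx)).symm) measurableSet_Ioo).re
  simp only [RCLike.re_to_complex, Complex.ofReal_re] at hRe
  exact hRe

lemma integral_rpow_mul_one_sub_rpow (hu : 0 < u) (hv : 0 < v) :
    ∫ x in Ioo (0 : ℝ) 1, x ^ (u - 1) * (1 - x) ^ (v - 1) = Gamma u * Gamma v / Gamma (u + v) := by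
  have hB := Complex.betaIntegral_eq_Gamma_mul_div u v (by simpa) (by simpa)
  rw [Complex.betaIntegral, intervalIntegral.integral_of_le zero_le_one,
    integral_Ioc_eq_integral_Ioo, ← setIntegral_congr_fun measurableSet_Ioo
      (fun x hx => ofReal_rpow_mul_one_sub_rpow (Ioo_subset_Icc_self hx)),
    integral_complex_ofReal, ← Complex.ofReal_add, Complex.Gamma_ofReal, Complex.Gamma_ofReal,
    Complex.Gamma_ofReal] at hB
  exact_mod_cast hB

end BetaIntegral

section Substitution

lemma hasDerivAt_div_one_sub {t : ℝ} (ht : t ≠ 1) :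
    HasDerivAt (fun s : ℝ => s / (1 - s)) (((1 - t) ^ 2)⁻¹) t := by
  have h1t : 1 - t ≠ 0 := sub_ne_zero.2 (Ne.symm ht)
  refine ((hasDerivAt_id' t).fun_div ((hasDerivAt_const t 1).fun_sub (hasDerivAt_id' t))
    h1t).congr_deriv ?_
  field_simp
  ring

lemma injOn_div_one_sub : InjOn (fun t : ℝ => t / (1 - t)) (Iio 1) := by
  intro s hs t ht hst
  have h1s : 1 - s ≠ 0 := by linarith [mem_Iio.1 hs]
  have h1t : 1 - t ≠ 0 := by linarith [mem_Iio.1 ht]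
  simp only at hst
  field_simp at hst
  linarith

lemma image_div_one_sub_Ioo : (fun t : ℝ => t / (1 - t)) '' Ioo 0 1 = Ioi 0 := by
  ext x
  constructor
  · rintro ⟨t, ⟨ht0, ht1⟩, rfl⟩
    exact div_pos ht0 (sub_pos.2 ht1)
  · intro (hx : 0 < x)
    refine ⟨x / (1 + x), ⟨by positivity, (div_lt_one (by positivity)).2 (by linarith)⟩, ?_⟩
    have h1x : 1 + x ≠ 0 := by positivity
    simp only
    rw [one_sub_div h1x, div_div_div_cancel_right₀ h1x]
    ring_nf

variable {E : Type*} [NormedAddCommGroup E] [NormedSpace ℝ E]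

lemma integrableOn_Ioi_iff_integrableOn_div_one_sub (g : ℝ → E) :
    IntegrableOn g (Ioi 0) ↔
      IntegrableOn (fun t : ℝ => ((1 - t) ^ 2)⁻¹ • g (t / (1 - t))) (Ioo 0 1) := by
  rw [← image_div_one_sub_Ioo, integrableOn_image_iff_integrableOn_abs_deriv_smul
    measurableSet_Ioo (fun t ht => (hasDerivAt_div_one_sub ht.2.ne).hasDerivWithinAt)
    (injOn_div_one_sub.mono fun t ht => ht.2)]
  simp only [abs_inv, abs_sq]

lemma integral_Ioi_eq_integral_div_one_sub (g : ℝ → E) :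
    ∫ x in Ioi 0, g x = ∫ t in Ioo 0 1, ((1 - t) ^ 2)⁻¹ • g (t / (1 - t)) := by
  rw [← image_div_one_sub_Ioo, integral_image_eq_integral_abs_deriv_smul
    measurableSet_Ioo (fun t ht => (hasDerivAt_div_one_sub ht.2.ne).hasDerivWithinAt)
    (injOn_div_one_sub.mono fun t ht => ht.2)]
  simp only [abs_inv, abs_sq]

end Substitution

section BetaPrime

variable {u v : ℝ}

lemma inv_one_sub_sq_mul_rpow_div_one_add_rpow {t : ℝ} (ht : t ∈ Ioo 0 1) :
    ((1 - t) ^ 2)⁻¹ * ((t / (1 - t)) ^ (u - 1) / (1 + t / (1 - t)) ^ (u + v)) =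
      t ^ (u - 1) * (1 - t) ^ (v - 1) := by
  have h1t : 0 < 1 - t := sub_pos.2 ht.2
  have hsum : 1 + t / (1 - t) = (1 - t)⁻¹ := by field_simp; ring
  have hsplit : (1 - t) ^ (u + v) = (1 - t) ^ (u - 1) * (1 - t) ^ (v - 1) * (1 - t) ^ 2 := by
    rw [← rpow_add h1t, ← rpow_natCast, ← rpow_add h1t]
    ring_nf
  rw [hsum, div_rpow ht.1.le h1t.le, inv_rpow h1t.le, hsplit]
  have hne : (1 - t) ^ (u - 1) ≠ 0 := (rpow_pos_of_pos h1t _).ne'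
  field_simp

theorem integrableOn_rpow_div_one_add_rpow (hu : 0 < u) (hv : 0 < v) :
    IntegrableOn (fun x : ℝ => x ^ (u - 1) / (1 + x) ^ (u + v)) (Ioi 0) := by
  rw [integrableOn_Ioi_iff_integrableOn_div_one_sub]
  exact (integrableOn_rpow_mul_one_sub_rpow hu hv).congr_fun
    (fun t ht => (inv_one_sub_sq_mul_rpow_div_one_add_rpow ht).symm) measurableSet_Ioo

theorem integral_rpow_div_one_add_rpow (hu : 0 < u) (hv : 0 < v) :
    ∫ x in Ioi (0 : ℝ), x ^ (u - 1) / (1 + x) ^ (u + v) = Gamma u * Gamma v / Gamma (u + v) := by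
  rw [integral_Ioi_eq_integral_div_one_sub, ← integral_rpow_mul_one_sub_rpow hu hv]
  exact setIntegral_congr_fun measurableSet_Ioo fun t ht =>
    inv_one_sub_sq_mul_rpow_div_one_add_rpow ht

end BetaPrime

theorem integral_rpow_div_one_add (a : ℝ) (ha0 : 0 < a) (ha1 : a < 1) :
    IntegrableOn (fun x : ℝ => x ^ (a - 1) / (1 + x)) (Ioi 0) ∧
    ∫ x in Ioi (0 : ℝ), x ^ (a - 1) / (1 + x) = π * (1 / Real.sin (a * π)) := by
  have hb : 0 < 1 - a := sub_pos.2 ha1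
  have hf : (fun x : ℝ => x ^ (a - 1) / (1 + x) ^ (a + (1 - a))) =
      fun x => x ^ (a - 1) / (1 + x) := by
    simp only [add_sub_cancel, rpow_one]
  refine ⟨hf ▸ integrableOn_rpow_div_one_add_rpow ha0 hb, ?_⟩
  rw [← hf, integral_rpow_div_one_add_rpow ha0 hb, add_sub_cancel, Gamma_one, div_one,
    Gamma_mul_Gamma_one_sub, mul_comm a π, one_div, div_eq_mul_inv]
end

section
/- There exists a constant C > 0 such that for every even integer n ≥ 2, the alternating cosecant sum satisfies |∑_{j=1}^{n-1} (−1)^{j+1} csc(jπ/n) − (n/π)·log 4| ≤ C. -/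
open Real Finset

/-! For `n = 2m` the summand is invariant under `j ↦ n - j`, so the sum is twice the sum over
`0 < j < m` plus the middle term `±1`. There write `csc x = 1/x + cscSubInv x`, where
`cscSubInv` is Lipschitz on `(0, π/2]`. The `1/x` part contributes `2m/π` times a partial sum of the
alternating harmonic series, which is `log 2 + O(1/m)`. The other part is an alternating sum of
`m - 1` bounded values whose consecutive differences are `O(1/m)`, so pairing neighbouring terms
shows it is `O(1)`. -/

lemma abs_sum_range_neg_one_pow_mul_le {a : ℕ → ℝ} {d B : ℝ} (hd : 0 ≤ d) (hB : 0 ≤ B)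
    {k : ℕ} (hstep : ∀ j, j + 1 < k → |a (j + 1) - a j| ≤ d) (hbound : ∀ j < k, |a j| ≤ B) :
    |∑ j ∈ range k, (-1) ^ j * a j| ≤ k * d / 2 + B := by
  induction k using Nat.twoStepInduction with
  | zero => simpa using hB
  | one => simpa using (hbound 0 one_pos).trans (le_add_of_nonneg_left (by positivity))
  | more k ih _ =>
    have hpair : |(-1) ^ k * a k + (-1) ^ (k + 1) * a (k + 1)| ≤ d := by
      rw [show (-1) ^ k * a k + (-1) ^ (k + 1) * a (k + 1) = -((-1) ^ k * (a (k + 1) - a k)) by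
        ring, abs_neg, abs_mul, abs_neg_one_pow, one_mul]
      exact hstep k (by omega)
    rw [sum_range_succ, sum_range_succ, add_assoc]
    calc _ ≤ (k * d / 2 + B) + d := (abs_add_le _ _).trans <| add_le_add
          (ih (fun j hj => hstep j (by omega)) (fun j hj => hbound j (by omega))) hpair
      _ = ((k + 2 : ℕ) : ℝ) * d / 2 + B := by push_cast; ring

lemma integral_inv_one_add : ∫ t in (0 : ℝ)..1, (1 + t)⁻¹ = log 2 := by
  rw [intervalIntegral.integral_comp_add_left (fun t => t⁻¹), integral_inv] <;> norm_num

lemma sum_range_neg_one_pow_div_succ (k : ℕ) :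
    ∑ i ∈ range k, (-1 : ℝ) ^ i / (i + 1) = log 2 - ∫ t in (0 : ℝ)..1, (-t) ^ k / (1 + t) := by
  have hpos : ∀ t ∈ Set.uIcc (0 : ℝ) 1, 1 + t ≠ 0 := fun t ht => by
    rw [Set.uIcc_of_le zero_le_one] at ht; linarith [ht.1]
  have hgeom : ∀ t ∈ Set.uIcc (0 : ℝ) 1,
      ∑ i ∈ range k, (-t) ^ i = (1 + t)⁻¹ - (-t) ^ k / (1 + t) := fun t ht => by
    have h1 : -t - 1 ≠ 0 := fun h => hpos t ht (by linarith)
    rw [geom_sum_eq (fun h => h1 (by rw [h]; ring)), div_eq_iff h1]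
    field_simp [hpos t ht]
    ring
  calc ∑ i ∈ range k, (-1 : ℝ) ^ i / (i + 1) = ∫ t in (0 : ℝ)..1, ∑ i ∈ range k, (-t) ^ i := by
        rw [intervalIntegral.integral_finsetSum fun i _ =>
          (by fun_prop : Continuous fun t : ℝ => (-t) ^ i).intervalIntegrable 0 1]
        refine sum_congr rfl fun i _ => ?_
        rw [show (fun t : ℝ => (-t) ^ i) = fun t => (-1) ^ i * t ^ i from funext fun t => neg_pow t i,
          intervalIntegral.integral_const_mul, integral_pow]
        simp [div_eq_mul_inv]
    _ = ∫ t in (0 : ℝ)..1, ((1 + t)⁻¹ - (-t) ^ k / (1 + t)) := intervalIntegral.integral_congr hgeom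
    _ = _ := by
      rw [intervalIntegral.integral_sub, integral_inv_one_add]
      · exact (continuousOn_inv₀.comp (by fun_prop) hpos).intervalIntegrable
      · exact ((continuous_neg.pow k).continuousOn.div (by fun_prop) hpos).intervalIntegrable

lemma abs_sum_range_neg_one_pow_div_succ_sub_log_two_le (k : ℕ) :
    |∑ i ∈ range k, (-1 : ℝ) ^ i / (i + 1) - log 2| ≤ 1 / (k + 1) := by
  rw [sum_range_neg_one_pow_div_succ, sub_sub_cancel_left, abs_neg]
  calc |∫ t in (0 : ℝ)..1, (-t) ^ k / (1 + t)| ≤ ∫ t in (0 : ℝ)..1, t ^ k := by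
        refine intervalIntegral.norm_integral_le_of_norm_le (f := fun t : ℝ => (-t) ^ k / (1 + t))
          zero_le_one (Filter.Eventually.of_forall fun t ht => ?_)
          ((continuous_pow k).intervalIntegrable 0 1)
        rw [Real.norm_eq_abs, abs_div, abs_pow, abs_neg, abs_of_pos ht.1,
          abs_of_pos (by linarith [ht.1] : (0 : ℝ) < 1 + t)]
        exact div_le_self (pow_nonneg ht.1.le k) (by linarith [ht.1])
    _ = 1 / (k + 1) := by simp [integral_pow]

noncomputable def cscSubInv (x : ℝ) : ℝ := (sin x)⁻¹ - x⁻¹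

lemma hasDerivAt_cscSubInv {x : ℝ} (hx : x ≠ 0) (hsin : sin x ≠ 0) :
    HasDerivAt cscSubInv (x⁻¹ ^ 2 - cos x / sin x ^ 2) x :=
  (((hasDerivAt_sin x).inv hsin).sub (hasDerivAt_inv hx)).congr_deriv (by rw [inv_pow]; ring)

lemma abs_sin_sq_sub_sq_mul_cos_le {x : ℝ} (hx₀ : 0 ≤ x) (hx : x ≤ π / 2) :
    |sin x ^ 2 - x ^ 2 * cos x| ≤ x ^ 4 / 2 := by
  have hsin_ge : x - x ^ 3 / 6 ≤ sin x := sin_ge_sub_cube hx₀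
  have hcos_ge : 1 - x ^ 2 / 2 ≤ cos x := one_sub_sq_div_two_le_cos
  have htaylor_nonneg : 0 ≤ x - x ^ 3 / 6 := by nlinarith [pi_lt_four]
  rw [abs_le]
  constructor
  · nlinarith [mul_le_mul_of_nonneg_left (cos_le_one x) (sq_nonneg x),
      mul_le_mul hsin_ge hsin_ge htaylor_nonneg (htaylor_nonneg.trans hsin_ge), pow_nonneg hx₀ 4,
      pow_nonneg hx₀ 6]
  · nlinarith [mul_le_mul_of_nonneg_left hcos_ge (sq_nonneg x), sin_sq_le_sq (x := x)]

lemma abs_deriv_cscSubInv_le {x : ℝ} (hx₀ : 0 < x) (hx : x ≤ π / 2) :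
    |x⁻¹ ^ 2 - cos x / sin x ^ 2| ≤ π ^ 2 / 8 := by
  have hsin : 2 / π * x ≤ sin x := mul_le_sin hx₀.le hx
  have hsin_pos : 0 < sin x := lt_of_lt_of_le (by positivity) hsin
  have hden : 4 / π ^ 2 * x ^ 4 ≤ x ^ 2 * sin x ^ 2 := by
    calc 4 / π ^ 2 * x ^ 4 = x ^ 2 * (2 / π * x) ^ 2 := by ring
      _ ≤ x ^ 2 * sin x ^ 2 := by gcongr
  have hden_pos : 0 < x ^ 2 * sin x ^ 2 := by positivity
  rw [show x⁻¹ ^ 2 - cos x / sin x ^ 2 = (sin x ^ 2 - x ^ 2 * cos x) / (x ^ 2 * sin x ^ 2) by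
    field_simp, abs_div, abs_of_pos hden_pos, div_le_iff₀ hden_pos]
  calc |sin x ^ 2 - x ^ 2 * cos x| ≤ x ^ 4 / 2 := abs_sin_sq_sub_sq_mul_cos_le hx₀.le hx
    _ = π ^ 2 / 8 * (4 / π ^ 2 * x ^ 4) := by field_simp; ring
    _ ≤ π ^ 2 / 8 * (x ^ 2 * sin x ^ 2) := by gcongr

lemma abs_cscSubInv_sub_le {x y : ℝ} (hx : x ∈ Set.Ioc 0 (π / 2)) (hy : y ∈ Set.Ioc 0 (π / 2)) :
    |cscSubInv y - cscSubInv x| ≤ π ^ 2 / 8 * |y - x| := by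
  refine (convex_Ioc 0 (π / 2)).norm_image_sub_le_of_norm_hasDerivWithin_le
    (fun z hz => (hasDerivAt_cscSubInv hz.1.ne' ?_).hasDerivWithinAt)
    (fun z hz => abs_deriv_cscSubInv_le hz.1 hz.2) hx hy
  exact (sin_pos_of_pos_of_lt_pi hz.1 (by linarith [hz.2, pi_pos])).ne'

lemma abs_sum_range_neg_one_pow_mul_cscSubInv_le {m : ℕ} (hm : 0 < m) :
    |∑ i ∈ range (m - 1), (-1) ^ i * cscSubInv ((i + 1) * (π / (2 * m)))| ≤
      |cscSubInv (π / 2)| + 3 * π ^ 3 / 32 := by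
  set h := π / (2 * m) with h_def
  have hh : 0 < h := by positivity
  have hmh : m * h = π / 2 := by rw [h_def]; field_simp
  have hmem : ∀ i, i < m - 1 → ((i : ℝ) + 1) * h ∈ Set.Ioc 0 (π / 2) := fun i hi => by
    have : (i : ℝ) + 1 ≤ m := by exact_mod_cast (by omega : i + 1 ≤ m)
    refine ⟨by positivity, ?_⟩
    calc ((i : ℝ) + 1) * h ≤ m * h := by gcongr
      _ = π / 2 := hmh
  have hbound : ∀ i < m - 1, |cscSubInv ((i + 1) * h)| ≤ |cscSubInv (π / 2)| + π ^ 3 / 16 := by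
    intro i hi
    have hhalf : π / 2 ∈ Set.Ioc 0 (π / 2) := ⟨by positivity, le_rfl⟩
    calc |cscSubInv ((i + 1) * h)|
        ≤ |cscSubInv (π / 2)| + |cscSubInv ((i + 1) * h) - cscSubInv (π / 2)| :=
          sub_le_iff_le_add'.1 (abs_sub_abs_le_abs_sub _ _)
      _ ≤ |cscSubInv (π / 2)| + π ^ 2 / 8 * |(i + 1) * h - π / 2| := by
          gcongr; exact abs_cscSubInv_sub_le hhalf (hmem i hi)
      _ ≤ |cscSubInv (π / 2)| + π ^ 2 / 8 * (π / 2) := by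
          gcongr; rw [abs_le]; constructor <;> linarith [(hmem i hi).1, (hmem i hi).2]
      _ = |cscSubInv (π / 2)| + π ^ 3 / 16 := by ring
  have hstep : ∀ i, i + 1 < m - 1 →
      |cscSubInv ((↑(i + 1) + 1) * h) - cscSubInv ((i + 1) * h)| ≤ π ^ 2 / 8 * h := fun i hi => by
    have := abs_cscSubInv_sub_le (hmem i (by omega)) (hmem (i + 1) hi)
    push_cast at this ⊢
    rwa [show ((i : ℝ) + 1 + 1) * h - (i + 1) * h = h by ring, abs_of_pos hh] at this
  calc _ ≤ (m - 1 : ℕ) * (π ^ 2 / 8 * h) / 2 + (|cscSubInv (π / 2)| + π ^ 3 / 16) :=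
        abs_sum_range_neg_one_pow_mul_le (a := fun i => cscSubInv ((i + 1) * h)) (by positivity)
          (by positivity) hstep hbound
    _ ≤ m * (π ^ 2 / 8 * h) / 2 + (|cscSubInv (π / 2)| + π ^ 3 / 16) := by
        gcongr; exact_mod_cast Nat.sub_le m 1
    _ = |cscSubInv (π / 2)| + 3 * π ^ 3 / 32 := by
        rw [show (m : ℝ) * (π ^ 2 / 8 * h) / 2 = π ^ 2 / 16 * (m * h) by ring, hmh]; ring

lemma sum_Ico_one_two_mul_eq_of_symm {M : Type*} [AddCommMonoid M] {f : ℕ → M} {m : ℕ}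
    (hm : 0 < m) (hf : ∀ j, 0 < j → j < m → f (2 * m - j) = f j) :
    ∑ j ∈ Ico 1 (2 * m), f j = 2 • ∑ j ∈ Ico 1 m, f j + f m := by
  have hupper : ∑ j ∈ Ico (m + 1) (2 * m), f j = ∑ j ∈ Ico 1 m, f j := by
    rw [← sum_congr rfl fun j hj => hf j (mem_Ico.1 hj).1 (mem_Ico.1 hj).2,
      sum_Ico_reflect f 1 (by omega : m ≤ 2 * m + 1), show 2 * m + 1 - m = m + 1 by omega,
      Nat.add_sub_cancel]
  rw [← sum_Ico_consecutive f (show 1 ≤ m by omega) (show m ≤ 2 * m by omega),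
    sum_eq_sum_Ico_succ_bot (show m < 2 * m by omega), hupper, two_nsmul]
  abel

lemma sum_Icc_neg_one_pow_div_sin_two_mul {m : ℕ} (hm : 0 < m) :
    ∑ j ∈ Icc 1 (2 * m - 1), (-1 : ℝ) ^ (j + 1) / sin (j * π / (2 * m)) =
      2 * ∑ i ∈ range (m - 1), (-1 : ℝ) ^ i / sin ((i + 1) * (π / (2 * m))) + (-1) ^ (m + 1) := by
  have hsymm : ∀ j, 0 < j → j < m →
      (-1 : ℝ) ^ (2 * m - j + 1) / sin (↑(2 * m - j) * π / (2 * m)) =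
        (-1) ^ (j + 1) / sin (j * π / (2 * m)) := fun j _ hj => by
    rw [show 2 * m - j + 1 = j + 1 + 2 * (m - j) by omega, pow_add, pow_mul, neg_one_sq, one_pow,
      mul_one, Nat.cast_sub (by omega),
      show ((2 * m : ℕ) - (j : ℝ)) * π / (2 * m) = π - j * π / (2 * m) by push_cast; field_simp,
      sin_pi_sub]
  have hmid : (-1 : ℝ) ^ (m + 1) / sin (m * π / (2 * m)) = (-1) ^ (m + 1) := by
    rw [show (m : ℝ) * π / (2 * m) = π / 2 by field_simp, sin_pi_div_two, div_one]
  rw [show Icc 1 (2 * m - 1) = Ico 1 (2 * m) by ext; simp; omega,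
    sum_Ico_one_two_mul_eq_of_symm hm hsymm, hmid, nsmul_eq_mul, sum_Ico_eq_sum_range]
  congr 3 with i
  push_cast
  ring_nf

lemma sum_range_neg_one_pow_div_sin_eq (k : ℕ) (h : ℝ) :
    ∑ i ∈ range k, (-1 : ℝ) ^ i / sin ((i + 1) * h) =
      h⁻¹ * ∑ i ∈ range k, (-1 : ℝ) ^ i / (i + 1) +
        ∑ i ∈ range k, (-1) ^ i * cscSubInv ((i + 1) * h) := by
  rw [mul_sum, ← sum_add_distrib]
  refine sum_congr rfl fun i _ => ?_
  simp only [cscSubInv, div_eq_mul_inv, mul_inv]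
  ring

theorem alternating_csc_sum_asymptotic :
    ∃ C : ℝ, 0 < C ∧ ∀ n : ℕ, Even n → 2 ≤ n →
      |(∑ j ∈ Finset.Icc 1 (n - 1), (-1 : ℝ) ^ (j + 1) / Real.sin (j * π / n)) -
          (n / π) * Real.log 4| ≤ C := by
  refine ⟨4 / π + 2 * (|cscSubInv (π / 2)| + 3 * π ^ 3 / 32) + 1, by positivity, ?_⟩
  rintro n ⟨m, rfl⟩ hn
  have hm : 0 < m := by omega
  set A := ∑ i ∈ range (m - 1), (-1 : ℝ) ^ i / (i + 1)
  set G := ∑ i ∈ range (m - 1), (-1 : ℝ) ^ i * cscSubInv ((i + 1) * (π / (2 * m)))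
  have hA : |A - log 2| ≤ 1 / m := by
    simpa [Nat.cast_sub hm] using abs_sum_range_neg_one_pow_div_succ_sub_log_two_le (m - 1)
  have hsum : ∑ j ∈ Icc 1 (m + m - 1), (-1 : ℝ) ^ (j + 1) / sin (j * π / ↑(m + m)) =
      4 * m / π * A + 2 * G + (-1) ^ (m + 1) := by
    rw [← two_mul, Nat.cast_mul, Nat.cast_two, sum_Icc_neg_one_pow_div_sin_two_mul hm,
      sum_range_neg_one_pow_div_sin_eq, inv_div]
    ring
  have hlog4 : log 4 = 2 * log 2 := by
    rw [show (4 : ℝ) = 2 ^ 2 by norm_num, log_pow, Nat.cast_two]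
  rw [hsum, hlog4]
  calc |4 * m / π * A + 2 * G + (-1) ^ (m + 1) - ↑(m + m) / π * (2 * log 2)|
      = |4 * m / π * (A - log 2) + 2 * G + (-1) ^ (m + 1)| := by push_cast; ring_nf
    _ ≤ 4 * m / π * |A - log 2| + 2 * |G| + 1 := by
      refine (abs_add_three _ _ _).trans_eq ?_
      rw [abs_mul, abs_mul, abs_of_pos (by positivity : (0 : ℝ) < 4 * m / π), abs_two,
        abs_neg_one_pow]
    _ ≤ 4 * m / π * (1 / m) + 2 * (|cscSubInv (π / 2)| + 3 * π ^ 3 / 32) + 1 := by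
      gcongr
      exact abs_sum_range_neg_one_pow_mul_cscSubInv_le hm
    _ = _ := by field_simp
end

section
/- There exists a constant C > 0 such that for every even integer n ≥ 4, |∑_{j=0}^{n/2−1} csc³((2j+1)π/n) − (7ζ(3)/(4π³))·n³| ≤ C·n·log n. -/
open Real Finset

/-!
On `(0, π)`, `csc³ t = 1/t³ + 1/(π - t)³ + O(1/t + 1/(π - t))`. The reflection `j ↦ m - 1 - j`
exchanges the angles `θⱼ = (2j + 1)π/(2m)` with `π - θⱼ`, so the main terms sum to
`2 (2m/π)³ ∑_{j<m} 1/(2j + 1)³`, which differs from `2 (2m/π)³ · (7/8) ζ(3)` only by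
`(2m/π)³` times a tail of size `O(1/m²)`, i.e. by `O(m)`. The error terms sum to
`O(m) · ∑_{j<m} 1/(2j + 1) = O(m log m)`.
-/

lemma one_div_pow_three_le_one_div_sin_pow_three {x : ℝ} (hx : 0 < x) (hx' : x < π) :
    1 / x ^ 3 ≤ (1 / sin x) ^ 3 := by
  rw [one_div_pow]
  exact one_div_le_one_div_of_le (pow_pos (sin_pos_of_pos_of_lt_pi hx hx') 3)
    (pow_le_pow_left₀ (sin_pos_of_pos_of_lt_pi hx hx').le (sin_le hx.le) 3)

/-- `x³ - sin³ x ≤ 3x² (x - sin x) ≤ x⁵ / 2`, while Jordan's inequality gives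
`sin³ x ≥ 8x³ / π³ ≥ x³ / 4`. -/
lemma one_div_sin_pow_three_sub_le {x : ℝ} (hx : 0 < x) (hx' : x ≤ π / 2) :
    (1 / sin x) ^ 3 - 1 / x ^ 3 ≤ 2 / x := by
  have hs_sub : x - x ^ 3 / 6 ≤ sin x := sin_ge_sub_cube hx.le
  have hs_le : sin x ≤ x := sin_le hx.le
  have hs_ge : 2 / π * x ≤ sin x := mul_le_sin hx.le hx'
  set s := sin x
  have hs : 0 < s := lt_of_lt_of_le (by positivity) hs_ge
  have hcube_diff : x ^ 3 - s ^ 3 ≤ x ^ 5 / 2 := calc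
    x ^ 3 - s ^ 3 = (x - s) * (x ^ 2 + x * s + s ^ 2) := by ring
    _ ≤ x ^ 3 / 6 * (3 * x ^ 2) :=
      mul_le_mul (by linarith) (by nlinarith) (by positivity) (by positivity)
    _ = x ^ 5 / 2 := by ring
  have hcube_lower : x ^ 3 / 4 ≤ s ^ 3 := calc
    x ^ 3 / 4 ≤ 8 / π ^ 3 * x ^ 3 := by
      have : π ^ 3 ≤ 32 := calc
        π ^ 3 ≤ 3.15 ^ 3 := pow_le_pow_left₀ pi_pos.le pi_lt_d2.le 3
        _ ≤ 32 := by norm_num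
      rw [div_mul_eq_mul_div, le_div_iff₀ (by positivity)]
      nlinarith [pow_pos hx 3]
    _ = (2 / π * x) ^ 3 := by ring
    _ ≤ s ^ 3 := by gcongr
  rw [show (1 / s) ^ 3 - 1 / x ^ 3 = (x ^ 3 - s ^ 3) / (x ^ 3 * s ^ 3) by field_simp,
    div_le_div_iff₀ (by positivity) hx]
  nlinarith [mul_le_mul_of_nonneg_left hcube_lower (pow_pos hx 3).le,
    mul_le_mul_of_nonneg_right hcube_diff hx.le]

lemma abs_one_div_sin_pow_three_sub_le {t : ℝ} (ht : 0 < t) (ht' : t < π) :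
    |(1 / sin t) ^ 3 - 1 / t ^ 3 - 1 / (π - t) ^ 3| ≤ 2 * (1 / t + 1 / (π - t)) := by
  wlog h : t ≤ π / 2 generalizing t
  · have := this (t := π - t) (by linarith) (by linarith) (by linarith)
    rw [sin_pi_sub, sub_sub_cancel] at this
    convert this using 2 <;> ring
  have hpt : 1 ≤ π - t := by linarith [pi_gt_three]
  have hlower := one_div_pow_three_le_one_div_sin_pow_three ht ht'
  have hupper := one_div_sin_pow_three_sub_le ht h
  have hrefl : 1 / (π - t) ^ 3 ≤ 1 / (π - t) :=
    one_div_le_one_div_of_le (by linarith) (le_self_pow₀ hpt (by norm_num))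
  have : 0 ≤ 1 / (π - t) ^ 3 := by positivity
  have : 0 ≤ 1 / t := by positivity
  rw [abs_le]
  constructor <;> linarith [show 2 / t = 2 * (1 / t) by ring]

lemma sum_range_comp_pi_sub_odd_angle {M : Type*} [AddCommMonoid M] (m : ℕ) (f : ℝ → M) :
    ∑ j ∈ range m, f (π - (2 * j + 1) * π / (2 * m)) =
      ∑ j ∈ range m, f ((2 * j + 1) * π / (2 * m)) := by
  rw [← sum_range_reflect]
  refine sum_congr rfl fun j hj => congrArg f ?_
  have hj := mem_range.mp hj
  have hm : (m : ℝ) ≠ 0 := by exact_mod_cast (show m ≠ 0 by omega)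
  rw [Nat.cast_sub (by omega), Nat.cast_sub (by omega)]
  field_simp
  push_cast
  ring

lemma sum_range_one_div_odd_angle_pow (m p : ℕ) :
    ∑ j ∈ range m, 1 / ((2 * j + 1) * π / (2 * m)) ^ p =
      (2 * m / π) ^ p * ∑ j ∈ range m, 1 / (2 * (j : ℝ) + 1) ^ p := by
  rw [mul_sum]
  refine sum_congr rfl fun j _ => ?_
  rw [← one_div_pow, one_div_div, ← one_div_pow, ← mul_pow]
  congr 1
  field_simp

lemma abs_sum_one_div_sin_odd_angle_pow_three_sub_le (m : ℕ) :
    |∑ j ∈ range m, (1 / sin ((2 * j + 1) * π / (2 * m))) ^ 3 -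
        2 * (2 * m / π) ^ 3 * ∑ j ∈ range m, 1 / (2 * (j : ℝ) + 1) ^ 3| ≤
      4 * (2 * m / π) * ∑ j ∈ range m, 1 / (2 * (j : ℝ) + 1) := by
  set θ : ℕ → ℝ := fun j => (2 * j + 1) * π / (2 * m)
  have hθ : ∀ j ∈ range m, 0 < θ j ∧ θ j < π := by
    intro j hj
    have hj : (j : ℝ) + 1 ≤ m := by exact_mod_cast mem_range.mp hj
    have hm : (0 : ℝ) < 2 * m := by linarith [j.cast_nonneg (α := ℝ)]
    refine ⟨by positivity, ?_⟩
    rw [div_lt_iff₀ hm]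
    nlinarith [pi_pos]
  have hmain : ∑ j ∈ range m, (1 / θ j ^ 3 + 1 / (π - θ j) ^ 3) =
      2 * (2 * m / π) ^ 3 * ∑ j ∈ range m, 1 / (2 * (j : ℝ) + 1) ^ 3 := by
    rw [sum_add_distrib, sum_range_comp_pi_sub_odd_angle m fun x => 1 / x ^ 3,
      sum_range_one_div_odd_angle_pow]
    ring
  have herror : ∑ j ∈ range m, 2 * (1 / θ j + 1 / (π - θ j)) =
      4 * (2 * m / π) * ∑ j ∈ range m, 1 / (2 * (j : ℝ) + 1) := by
    have hinv := sum_range_one_div_odd_angle_pow m 1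
    simp only [pow_one] at hinv
    rw [← mul_sum, sum_add_distrib, sum_range_comp_pi_sub_odd_angle m fun x => 1 / x, hinv]
    ring
  rw [← hmain, ← herror, ← sum_sub_distrib]
  refine (abs_sum_le_sum_abs _ _).trans (sum_le_sum fun j hj => ?_)
  rw [← sub_sub]
  exact abs_one_div_sin_pow_three_sub_le (hθ j hj).1 (hθ j hj).2

lemma sum_range_one_div_two_mul_add_one_le_one_add_log (m : ℕ) :
    ∑ j ∈ range m, 1 / (2 * (j : ℝ) + 1) ≤ 1 + log m := calc
  ∑ j ∈ range m, 1 / (2 * (j : ℝ) + 1) ≤ ∑ j ∈ range m, 1 / ((j : ℝ) + 1) := by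
    gcongr
    linarith [j.cast_nonneg (α := ℝ)]
  _ = harmonic m := by simp [harmonic, one_div]
  _ ≤ 1 + log m := harmonic_le_one_add_log m

lemma summable_one_div_nat_add_one_pow {p : ℕ} (hp : 1 < p) :
    Summable fun k : ℕ => 1 / ((k : ℝ) + 1) ^ p := by
  simpa using (summable_nat_add_iff 1).2 (summable_one_div_nat_pow.2 hp)

lemma summable_one_div_two_mul_add_one_pow {p : ℕ} (hp : 1 < p) :
    Summable fun k : ℕ => 1 / (2 * (k : ℝ) + 1) ^ p := by
  refine (summable_one_div_nat_add_one_pow hp).of_nonneg_of_le (fun k => by positivity) fun k => ?_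
  gcongr
  linarith [k.cast_nonneg (α := ℝ)]

lemma tsum_one_div_two_mul_add_one_pow {p : ℕ} (hp : 1 < p) :
    ∑' k : ℕ, 1 / (2 * (k : ℝ) + 1) ^ p = (1 - 1 / 2 ^ p) * ∑' k : ℕ, 1 / ((k : ℝ) + 1) ^ p := by
  have heven : ∀ k : ℕ,
      1 / (((2 * k + 1 : ℕ) : ℝ) + 1) ^ p = 1 / 2 ^ p * (1 / ((k : ℝ) + 1) ^ p) := by
    intro k
    push_cast
    rw [show 2 * (k : ℝ) + 1 + 1 = 2 * (k + 1) by ring, mul_pow]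
    field_simp
  have hsplit := tsum_even_add_odd (f := fun k : ℕ => 1 / ((k : ℝ) + 1) ^ p)
    (by simpa using summable_one_div_two_mul_add_one_pow hp)
    (by simpa only [heven] using (summable_one_div_nat_add_one_pow hp).mul_left _)
  simp only [heven, tsum_mul_left, Nat.cast_mul, Nat.cast_ofNat] at hsplit
  linarith

lemma tsum_sub_sum_range_one_div_two_mul_add_one_pow {p : ℕ} (hp : 1 < p) (m : ℕ) :
    (1 - 1 / 2 ^ p) * ∑' k : ℕ, 1 / ((k : ℝ) + 1) ^ p - ∑ j ∈ range m, 1 / (2 * (j : ℝ) + 1) ^ p =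
      ∑' i : ℕ, 1 / (2 * ((i + m : ℕ) : ℝ) + 1) ^ p := by
  rw [← tsum_one_div_two_mul_add_one_pow hp,
    ← (summable_one_div_two_mul_add_one_pow hp).sum_add_tsum_nat_add m]
  ring

/-- Telescoping against `1 / (k (k + 1))`, since `(2k + 1)³ ≥ 4k(k + 1)(k + 2)`. -/
lemma tsum_one_div_two_mul_add_one_pow_three_nat_add_le {m : ℕ} (hm : 0 < m) :
    ∑' i : ℕ, 1 / (2 * ((i + m : ℕ) : ℝ) + 1) ^ 3 ≤ 1 / (8 * (m : ℝ) ^ 2) := by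
  set b : ℕ → ℝ := fun k => 1 / ((k : ℝ) * (k + 1))
  have hstep : ∀ k : ℕ, 0 < k → 1 / (2 * (k : ℝ) + 1) ^ 3 ≤ (b k - b (k + 1)) / 8 := by
    intro k hk
    have hk : (1 : ℝ) ≤ k := by exact_mod_cast hk
    simp only [b, Nat.cast_add, Nat.cast_one]
    rw [show 1 / ((k : ℝ) * (k + 1)) - 1 / ((k + 1) * (k + 1 + 1)) = 2 / (k * (k + 1) * (k + 2)) by
      field_simp; ring]
    rw [div_div, div_le_div_iff₀ (by positivity) (by positivity)]
    have hk3 : (k : ℝ) ≤ k ^ 3 := le_self_pow₀ hk (by norm_num)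
    nlinarith
  refine Real.tsum_le_of_sum_range_le (fun i => by positivity) fun N => ?_
  calc ∑ i ∈ range N, 1 / (2 * ((i + m : ℕ) : ℝ) + 1) ^ 3
      ≤ ∑ i ∈ range N, (b (i + m) - b (i + 1 + m)) / 8 :=
        sum_le_sum fun i _ => by rw [add_right_comm]; exact hstep (i + m) (by omega)
    _ = (b m - b (N + m)) / 8 := by
        rw [← sum_div, sum_range_sub' (fun i => b (i + m)) N, zero_add]
    _ ≤ b m / 8 := by
        have : 0 ≤ b (N + m) := by positivity
        linarith
    _ ≤ 1 / (8 * (m : ℝ) ^ 2) := by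
        have : (0 : ℝ) < m := by exact_mod_cast hm
        simp only [b, div_div]
        exact one_div_le_one_div_of_le (by positivity) (by nlinarith)

lemma abs_sum_range_one_div_two_mul_add_one_pow_three_sub_le {m : ℕ} (hm : 0 < m) :
    |∑ j ∈ range m, 1 / (2 * (j : ℝ) + 1) ^ 3 - 7 / 8 * ∑' k : ℕ, 1 / ((k : ℝ) + 1) ^ 3| ≤
      1 / (8 * (m : ℝ) ^ 2) := by
  have htail := tsum_sub_sum_range_one_div_two_mul_add_one_pow (p := 3) (by norm_num) m
  norm_num only at htail
  rw [abs_sub_comm, htail, abs_of_nonneg (by positivity)]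
  exact tsum_one_div_two_mul_add_one_pow_three_nat_add_le hm

theorem csc_cubed_odd_sum_asymptotic :
    ∃ C : ℝ, 0 < C ∧ ∀ n : ℕ, Even n → 4 ≤ n →
      |(∑ j ∈ Finset.range (n / 2), (1 / Real.sin ((2 * j + 1) * π / n)) ^ 3) -
          (7 * (∑' k : ℕ, 1 / ((k : ℝ) + 1) ^ 3) / (4 * π ^ 3)) * n ^ 3| ≤
        C * n * Real.log n := by
  refine ⟨3, by norm_num, fun n hn_even hn => ?_⟩
  obtain ⟨m, rfl⟩ := even_iff_two_dvd.mp hn_even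
  have hm : (2 : ℝ) ≤ m := by exact_mod_cast (show 2 ≤ m by omega)
  rw [Nat.mul_div_cancel_left m two_pos]
  push_cast
  have hsin := abs_sum_one_div_sin_odd_angle_pow_three_sub_le m
  have hzeta := abs_sum_range_one_div_two_mul_add_one_pow_three_sub_le (m := m) (by omega)
  have hlog : 1 ≤ log (2 * m) := by
    rw [le_log_iff_exp_le (by positivity)]
    linarith [exp_one_lt_d9]
  have hharm : ∑ j ∈ range m, 1 / (2 * (j : ℝ) + 1) ≤ 2 * log (2 * m) :=
    (sum_range_one_div_two_mul_add_one_le_one_add_log m).trans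
      (by linarith [log_le_log (by positivity) (by linarith : (m : ℝ) ≤ 2 * m)])
  set ζ := ∑' k : ℕ, 1 / ((k : ℝ) + 1) ^ 3
  set P := ∑ j ∈ range m, 1 / (2 * (j : ℝ) + 1) ^ 3
  calc _ = |(∑ j ∈ range m, (1 / sin ((2 * j + 1) * π / (2 * m))) ^ 3 - 2 * (2 * m / π) ^ 3 * P) +
          2 * (2 * m / π) ^ 3 * (P - 7 / 8 * ζ)| := by
        congr 1
        ring
    _ ≤ 4 * (2 * m / π) * (2 * log (2 * m)) + 2 * (2 * m / π) ^ 3 * (1 / (8 * (m : ℝ) ^ 2)) := by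
        refine (abs_add_le _ _).trans (add_le_add (hsin.trans (by gcongr)) ?_)
        rw [abs_mul, abs_of_nonneg (by positivity)]
        gcongr
    _ = 4 * (2 * m / π) * (2 * log (2 * m)) + 2 * m / π ^ 3 := by
        field_simp
        ring
    _ ≤ 4 * (2 * m / 3) * (2 * log (2 * m)) + 2 * m / 27 := by
        have hπ : 3 ≤ π := pi_gt_three.le
        have hπ3 : (27 : ℝ) ≤ π ^ 3 := calc
          (27 : ℝ) = 3 ^ 3 := by norm_num
          _ ≤ π ^ 3 := by gcongr
        gcongr
    _ ≤ 3 * (2 * m) * log (2 * m) := by nlinarith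
end

section
/- There exists a constant C > 0 such that for every even integer n ≥ 4, |∑_{j=1}^{n/2−1} csc³(2jπ/n) − (ζ(3)/(4π³))·n³| ≤ C·n·log n. -/
open Real Finset

/-!
Write `n = 2m`, so the sum is `∑_{0<j<m} csc³(jπ/m)`. From `θ - θ³/6 < sin θ ≤ θ` and
Jordan's inequality `sin θ ≥ 2θ/π`, `csc³ θ` differs from its two poles
`θ⁻³ + (π - θ)⁻³` by at most `2/θ + 2/(π - θ)` on `(0, π)`. At `θ = jπ/m` the poles sum,
by the symmetry `j ↦ m - j`, to `2 (m/π)³ ∑_{j<m} j⁻³`, which is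
`2 (m/π)³ ζ(3) = ζ(3) n³ / (4π³)` up to `O(m)`, while the errors sum to
`(4m/π) H_{m-1} = O(m log m)`.
-/

theorem abs_one_div_sin_pow_three_sub_le_s7 {θ : ℝ} (h0 : 0 < θ) (hθ : θ ≤ π / 2) :
    |(1 / sin θ) ^ 3 - 1 / θ ^ 3| ≤ 2 / θ := by
  have hlow : 2 / π * θ ≤ sin θ := mul_le_sin h0.le hθ
  have hs : 0 < sin θ := lt_of_lt_of_le (by positivity) hlow
  have hle : sin θ ≤ θ := sin_le h0.le
  have hsin3 : θ ^ 3 ≤ 4 * sin θ ^ 3 := by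
    have hπ : π ^ 3 ≤ 32 := by
      nlinarith [pow_le_pow_left₀ pi_pos.le pi_lt_d2.le 3]
    calc θ ^ 3 ≤ 32 / π ^ 3 * θ ^ 3 :=
          le_mul_of_one_le_left (by positivity) ((one_le_div (by positivity)).mpr hπ)
      _ = 4 * (2 / π * θ) ^ 3 := by ring
      _ ≤ 4 * sin θ ^ 3 := by gcongr
  have hdiff : θ ^ 3 - sin θ ^ 3 ≤ θ ^ 5 / 2 :=
    calc θ ^ 3 - sin θ ^ 3 = (θ - sin θ) * (θ ^ 2 + θ * sin θ + sin θ ^ 2) := by ring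
      _ ≤ θ ^ 3 / 6 * (3 * θ ^ 2) := by
          gcongr
          · linarith [sin_gt_sub_cube h0]
          · nlinarith [mul_le_mul hle hle hs.le h0.le]
      _ = θ ^ 5 / 2 := by ring
  rw [one_div_pow, abs_of_nonneg (sub_nonneg.mpr (by gcongr)),
    div_sub_div _ _ (by positivity) (by positivity), div_le_div_iff₀ (by positivity) h0]
  nlinarith [mul_le_mul_of_nonneg_right hdiff h0.le,
    mul_le_mul_of_nonneg_left hsin3 (pow_pos h0 3).le]

theorem abs_one_div_sin_pow_three_sub_poles_le {θ : ℝ} (h0 : 0 < θ) (hπ : θ < π) :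
    |(1 / sin θ) ^ 3 - (1 / θ ^ 3 + 1 / (π - θ) ^ 3)| ≤ 2 / θ + 2 / (π - θ) := by
  wlog hθ : θ ≤ π / 2 generalizing θ
  · have h := this (θ := π - θ) (by linarith) (by linarith) (by linarith)
    rwa [sin_pi_sub, sub_sub_cancel, add_comm (1 / (π - θ) ^ 3), add_comm (2 / (π - θ))] at h
  have hφ : 1 ≤ π - θ := by linarith [pi_gt_three]
  have hφ0 : 0 < π - θ := by linarith
  have hreflect : 1 / (π - θ) ^ 3 ≤ 2 / (π - θ) :=
    calc 1 / (π - θ) ^ 3 ≤ 1 / (π - θ) ^ 1 :=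
          one_div_le_one_div_of_le (by positivity) (pow_le_pow_right₀ hφ (by norm_num))
      _ ≤ 2 / (π - θ) := by rw [pow_one]; gcongr; norm_num
  calc |(1 / sin θ) ^ 3 - (1 / θ ^ 3 + 1 / (π - θ) ^ 3)|
      ≤ |(1 / sin θ) ^ 3 - 1 / θ ^ 3| + |1 / (π - θ) ^ 3| := by
        rw [← sub_sub]
        exact abs_sub _ _
    _ = |(1 / sin θ) ^ 3 - 1 / θ ^ 3| + 1 / (π - θ) ^ 3 := by
        rw [abs_of_pos (a := 1 / (π - θ) ^ 3) (by positivity)]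
    _ ≤ 2 / θ + 2 / (π - θ) := add_le_add (abs_one_div_sin_pow_three_sub_le_s7 h0 hθ) hreflect

theorem one_div_pow_three_le_two_div_mul_sub {m x : ℝ} (hm : 0 < m) (hmx : m ≤ x)
    (hx : 1 ≤ x) :
    1 / x ^ 3 ≤ 2 / m * (1 / x - 1 / (x + 1)) := by
  have hx0 : 0 < x := by linarith
  have h : m * (x + 1) ≤ x * (2 * x) := mul_le_mul hmx (by linarith) (by linarith) hx0.le
  rw [div_sub_div _ _ hx0.ne' (by linarith), div_mul_div_comm,
    div_le_div_iff₀ (by positivity) (by positivity)]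
  nlinarith [mul_le_mul_of_nonneg_left h hx0.le]

theorem tsum_one_div_add_pow_three_le {m : ℕ} (hm : 1 ≤ m) :
    ∑' k : ℕ, 1 / ((k : ℝ) + m) ^ 3 ≤ 2 / (m : ℝ) ^ 2 := by
  have hm' : (1 : ℝ) ≤ m := by exact_mod_cast hm
  refine Real.tsum_le_of_sum_range_le (fun k => by positivity) fun N => ?_
  calc ∑ k ∈ range N, 1 / ((k : ℝ) + m) ^ 3
      ≤ ∑ k ∈ range N, 2 / m * (1 / ((k : ℝ) + m) - 1 / (((k + 1 : ℕ) : ℝ) + m)) :=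
        sum_le_sum fun k _ => by
          rw [Nat.cast_succ, add_right_comm]
          have hk : (0 : ℝ) ≤ k := k.cast_nonneg
          exact one_div_pow_three_le_two_div_mul_sub (by linarith) (by linarith) (by linarith)
    _ = 2 / m * (1 / m - 1 / ((N : ℝ) + m)) := by
        rw [← mul_sum, sum_range_sub' (fun k : ℕ => 1 / ((k : ℝ) + m)), Nat.cast_zero,
          zero_add]
    _ ≤ 2 / m * (1 / m) := by gcongr; exact sub_le_self _ (by positivity)
    _ = 2 / (m : ℝ) ^ 2 := by ring

theorem abs_sum_Icc_one_div_pow_three_sub_tsum_le {m : ℕ} (hm : 1 ≤ m) :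
    |∑ j ∈ Icc 1 (m - 1), 1 / (j : ℝ) ^ 3 - ∑' k : ℕ, 1 / ((k : ℝ) + 1) ^ 3| ≤
      2 / (m : ℝ) ^ 2 := by
  have hs : Summable fun k : ℕ => 1 / ((k : ℝ) + 1) ^ 3 := by
    simpa using (summable_nat_add_iff 1).mpr (Real.summable_one_div_nat_pow.mpr (by norm_num))
  have hhead : ∑ i ∈ range (m - 1), 1 / ((i : ℝ) + 1) ^ 3 =
      ∑ j ∈ Icc 1 (m - 1), 1 / (j : ℝ) ^ 3 := by
    rw [range_eq_Ico, ← Ico_add_one_right_eq_Icc]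
    simpa only [Nat.cast_add, Nat.cast_one, zero_add] using
      sum_Ico_add' (fun j : ℕ => 1 / (j : ℝ) ^ 3) 0 (m - 1) 1
  have htail : ∑' i : ℕ, 1 / (((i + (m - 1) : ℕ) : ℝ) + 1) ^ 3 =
      ∑' k : ℕ, 1 / ((k : ℝ) + m) ^ 3 := by
    congr! 4 with k
    push_cast [Nat.cast_sub hm]
    ring
  rw [← hs.sum_add_tsum_nat_add (m - 1), hhead, htail, sub_add_cancel_left, abs_neg,
    abs_of_nonneg (tsum_nonneg fun k => by positivity)]
  exact tsum_one_div_add_pow_three_le hm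

theorem sum_Icc_one_sub_reflect {M : Type*} [AddCommMonoid M] (f : ℕ → M) (m : ℕ) :
    ∑ j ∈ Icc 1 (m - 1), f (m - j) = ∑ j ∈ Icc 1 (m - 1), f j := by
  refine sum_nbij' (m - ·) (m - ·) ?_ ?_ ?_ ?_ fun _ _ => rfl <;>
    intro j hj <;> simp only [mem_Icc] at * <;> omega

theorem sum_Icc_add_reflect_angle (F : ℝ → ℝ) (m : ℕ) :
    ∑ j ∈ Icc 1 (m - 1), (F (j * π / m) + F (π - j * π / m)) =
      2 * ∑ j ∈ Icc 1 (m - 1), F (j * π / m) := by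
  have h : ∀ j ∈ Icc 1 (m - 1), F (π - j * π / m) = F ((m - j : ℕ) * π / m) := by
    intro j hj
    rw [mem_Icc] at hj
    have hm : (m : ℝ) ≠ 0 := by norm_cast; omega
    rw [Nat.cast_sub (by omega)]
    field_simp
  rw [sum_add_distrib, sum_congr rfl h, sum_Icc_one_sub_reflect (fun j : ℕ => F (j * π / m)),
    two_mul]

theorem angle_mem_Ioo {m j : ℕ} (hj : j ∈ Icc 1 (m - 1)) :
    0 < (j : ℝ) * π / m ∧ (j : ℝ) * π / m < π := by
  rw [mem_Icc] at hj
  have hj1 : (1 : ℝ) ≤ j := by exact_mod_cast hj.1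
  have hjm : (j : ℝ) < m := by norm_cast; omega
  have hm0 : (0 : ℝ) < m := by linarith
  exact ⟨by positivity, by rw [div_lt_iff₀ hm0]; nlinarith [pi_pos]⟩

theorem sum_Icc_one_div_angle_pow_three_add_reflect (m : ℕ) :
    ∑ j ∈ Icc 1 (m - 1), (1 / ((j : ℝ) * π / m) ^ 3 + 1 / (π - j * π / m) ^ 3) =
      2 * (m / π) ^ 3 * ∑ j ∈ Icc 1 (m - 1), 1 / (j : ℝ) ^ 3 := by
  rw [sum_Icc_add_reflect_angle (fun x : ℝ => 1 / x ^ 3), mul_assoc]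
  congr 1
  rw [mul_sum]
  refine sum_congr rfl fun j hj => ?_
  have hm : (m : ℝ) ≠ 0 := by rw [mem_Icc] at hj; norm_cast; omega
  field_simp

theorem sum_Icc_two_div_angle_add_reflect_le {m : ℕ} (hm : 2 ≤ m) :
    ∑ j ∈ Icc 1 (m - 1), (2 / ((j : ℝ) * π / m) + 2 / (π - j * π / m)) ≤
      4 * m / π * (1 + log m) := by
  have hm0 : (0 : ℝ) < m := by norm_cast; omega
  rw [sum_Icc_add_reflect_angle (fun x : ℝ => 2 / x)]
  calc 2 * ∑ j ∈ Icc 1 (m - 1), 2 / ((j : ℝ) * π / m)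
      = 4 * m / π * harmonic (m - 1) := by
        push_cast [harmonic_eq_sum_Icc]
        rw [mul_sum, mul_sum]
        refine sum_congr rfl fun j _ => ?_
        field_simp
        ring
    _ ≤ 4 * m / π * (1 + log m) := by
        gcongr
        refine (harmonic_le_one_add_log _).trans ?_
        gcongr
        · exact Nat.cast_pos.mpr (by omega)
        · exact Nat.cast_le.mpr (Nat.sub_le m 1)

theorem abs_sum_one_div_sin_pow_three_sub_le {m : ℕ} (hm : 2 ≤ m) :
    |∑ j ∈ Icc 1 (m - 1), (1 / sin (j * π / m)) ^ 3 -
        2 * (m / π) ^ 3 * ∑' k : ℕ, 1 / ((k : ℝ) + 1) ^ 3|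
      ≤ 4 * m / π * (1 + log m) + 4 * m / π ^ 3 := by
  have hm0 : (0 : ℝ) < m := by norm_cast; omega
  calc _ = |∑ j ∈ Icc 1 (m - 1), ((1 / sin (j * π / m)) ^ 3 -
          (1 / ((j : ℝ) * π / m) ^ 3 + 1 / (π - j * π / m) ^ 3)) +
        2 * (m / π) ^ 3 * (∑ j ∈ Icc 1 (m - 1), 1 / (j : ℝ) ^ 3 -
          ∑' k : ℕ, 1 / ((k : ℝ) + 1) ^ 3)| := by
        congr 1
        rw [sum_sub_distrib, sum_Icc_one_div_angle_pow_three_add_reflect]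
        ring
    _ ≤ ∑ j ∈ Icc 1 (m - 1), (2 / ((j : ℝ) * π / m) + 2 / (π - j * π / m)) +
        2 * (m / π) ^ 3 * (2 / (m : ℝ) ^ 2) := by
        refine (abs_add_le _ _).trans (add_le_add ((abs_sum_le_sum_abs _ _).trans
          (sum_le_sum fun j hj => ?_)) ?_)
        · exact abs_one_div_sin_pow_three_sub_poles_le (angle_mem_Ioo hj).1
            (angle_mem_Ioo hj).2
        · rw [abs_mul, abs_of_pos (by positivity)]
          gcongr
          exact abs_sum_Icc_one_div_pow_three_sub_tsum_le (by omega)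
    _ = ∑ j ∈ Icc 1 (m - 1), (2 / ((j : ℝ) * π / m) + 2 / (π - j * π / m)) +
        4 * m / π ^ 3 := by
        field_simp
        ring
    _ ≤ 4 * m / π * (1 + log m) + 4 * m / π ^ 3 := by
        grw [sum_Icc_two_div_angle_add_reflect_le hm]

theorem four_mul_div_pi_mul_one_add_log_add_le {x : ℝ} (hx : 1 ≤ x) :
    4 * x / π * (1 + log x) + 4 * x / π ^ 3 ≤ 2 * (2 * x) * log (2 * x) := by
  have hπ : 3 < π := pi_gt_three
  have hlog2 : 1 < 2 * log 2 := by linarith [log_two_gt_d9]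
  have hlogx : 0 ≤ log x := log_nonneg hx
  have h1 : 4 * x / π * (1 + log x) ≤ 4 / 3 * (x * (1 + log x)) := by
    rw [show 4 * x / π * (1 + log x) = 4 / π * (x * (1 + log x)) by ring]
    gcongr
  have h2 : 4 * x / π ^ 3 ≤ x / 6 := by
    rw [div_le_div_iff₀ (by positivity) (by norm_num)]
    nlinarith [pow_le_pow_left₀ (by norm_num) hπ.le 3]
  rw [log_mul two_ne_zero (by linarith)]
  nlinarith [mul_lt_mul_of_pos_left hlog2 (by linarith : 0 < x),
    mul_nonneg (by linarith : 0 ≤ x) hlogx]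

theorem csc_cubed_even_sum_asymptotic :
    ∃ C : ℝ, 0 < C ∧ ∀ n : ℕ, Even n → 4 ≤ n →
      |(∑ j ∈ Finset.Icc 1 (n / 2 - 1), (1 / Real.sin (2 * j * π / n)) ^ 3) -
          ((∑' k : ℕ, 1 / ((k : ℝ) + 1) ^ 3) / (4 * π ^ 3)) * n ^ 3| ≤
        C * n * Real.log n := by
  refine ⟨2, two_pos, fun n hn h4 => ?_⟩
  obtain ⟨m, rfl⟩ := even_iff_two_dvd.mp hn
  have hm : 2 ≤ m := by omega
  have hangle (j : ℕ) : 2 * (j : ℝ) * π / (2 * m : ℕ) = j * π / m := by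
    push_cast
    rw [mul_assoc, mul_div_mul_left _ _ two_ne_zero]
  rw [Nat.mul_div_cancel_left m two_pos]
  simp_rw [hangle]
  calc _ = |∑ j ∈ Icc 1 (m - 1), (1 / sin (j * π / m)) ^ 3 -
          2 * (m / π) ^ 3 * ∑' k : ℕ, 1 / ((k : ℝ) + 1) ^ 3| := by
        congr 2
        push_cast
        ring
    _ ≤ 4 * m / π * (1 + log m) + 4 * m / π ^ 3 := abs_sum_one_div_sin_pow_three_sub_le hm
    _ ≤ 2 * (2 * m) * log (2 * m) :=
        four_mul_div_pi_mul_one_add_log_add_le (by exact_mod_cast (by omega : 1 ≤ m))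
    _ = _ := by push_cast; ring
end
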